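/- arXiv:1105.4577 — 7 statements merged into one kernel-verified Lean document; each statement's English description precedes it below -/
import Mathlib

section
/- The subset {v1,...,v8} of ℚ^8, where v1=(1,0,1,0,0,0,0,0), v2=(1,0,0,1,0,0,0,0), v3=(0,1,0,0,1,0,0,0), v4=(0,1,0,0,0,1,0,0), v5=(0,0,-1,-1,0,0,0,0), v6=(0,0,0,0,-1,-1,0,0), v7=(1,0,0,0,0,0,1,0), v8=(0,-1,0,0,0,0,1,0), is not saturated: the vector v0=(1,1,0,0,0,0,0,0) satisfies v0 = (v1+v2+v3+v4+v5+v6)/2 = v7 - v8, so v0 lies in the ℤ-linear span and in the ℚ≥0-cone of {v1,...,v8}, yet v0 is not a ℤ≥0-linear combination of v1,...,v8. -/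
namespace TorusNormal

/-- `V n` is the rational vector space `ℚ^n`. -/
abbrev V (n : ℕ) := Fin n → ℚ

/-- The standard scalar product on `ℚ^n`. -/
def dot {n : ℕ} (x y : V n) : ℚ := ∑ i, x i * y i

lemma dot_add_right {n : ℕ} (α x y : V n) : dot α (x + y) = dot α x + dot α y := by
  simp [dot, mul_add, Finset.sum_add_distrib]

lemma dot_smul_right {n : ℕ} (α : V n) (c : ℚ) (x : V n) : dot α (c • x) = c * dot α x := by
  simp [dot, Finset.mul_sum, mul_left_comm]

/-- The reflection `s_α : x ↦ x - (2(α,x)/(α,α))·α`, as a linear map. -/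
def reflLin {n : ℕ} (α : V n) : V n →ₗ[ℚ] V n where
  toFun x := x - ((2 * dot α x) / dot α α) • α
  map_add' x y := by
    try dsimp only
    rw [dot_add_right,
      show (2 * (dot α x + dot α y)) / dot α α
        = (2 * dot α x) / dot α α + (2 * dot α y) / dot α α by ring, add_smul]
    abel
  map_smul' c x := by
    try dsimp only
    rw [dot_smul_right]
    simp only [RingHom.id_apply]
    rw [smul_sub, smul_smul]
    congr 1
    congr 1
    ring

/-- The Weyl group of a root system `Φ`: the subgroup of `GL(ℚ^n)` generated by the
reflections `s_α`, `α ∈ Φ`. -/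
def weylGroup {n : ℕ} (Φ : Set (V n)) : Subgroup (Module.End ℚ (V n))ˣ :=
  Subgroup.closure {g | ∃ α ∈ Φ, g.val = reflLin α}

/-- The orbit of `l` under the Weyl group of `Φ`. -/
def weylOrbit {n : ℕ} (Φ : Set (V n)) (l : V n) : Set (V n) :=
  {x | ∃ g ∈ weylGroup Φ, x = g.val l}

/-- The weight polytope `P(λ)`: the convex hull of the Weyl orbit of `λ`. -/
def weightPolytope {n : ℕ} (Φ : Set (V n)) (l : V n) : Set (V n) :=
  convexHull ℚ (weylOrbit Φ l)

/-- `M(λ) = (λ + Ξ) ∩ P(λ)`, where `Ξ` is the root lattice (the ℤ-span of `Φ`). -/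
def Mset {n : ℕ} (Φ : Set (V n)) (l : V n) : Set (V n) :=
  {x | x - l ∈ Submodule.span ℤ Φ ∧ x ∈ weightPolytope Φ l}

/-- `v` is a ℚ≥0-linear combination of elements of `S`. -/
def InCone {n : ℕ} (S : Set (V n)) (v : V n) : Prop :=
  ∃ (t : Finset (V n)) (c : V n → ℚ),
    ↑t ⊆ S ∧ (∀ x ∈ t, 0 ≤ c x) ∧ v = ∑ x ∈ t, c x • x

/-- A set `S ⊆ ℚ^n` is saturated if every vector in the intersection of the ℤ-linear span
of `S` with the ℚ≥0-cone of `S` is a ℤ≥0-linear combination of elements of `S`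
(equivalently, lies in the additive submonoid generated by `S`). -/
def IsSaturated {n : ℕ} (S : Set (V n)) : Prop :=
  ∀ v : V n, v ∈ Submodule.span ℤ S → InCone S v → v ∈ AddSubmonoid.closure S

/-- A set is hereditarily normal if every subset is saturated. -/
def HereditarilyNormal {n : ℕ} (S : Set (V n)) : Prop :=
  ∀ T : Set (V n), T ⊆ S → IsSaturated T


def w1 : V 8 := ![1, 0, 1, 0, 0, 0, 0, 0]
def w2 : V 8 := ![1, 0, 0, 1, 0, 0, 0, 0]
def w3 : V 8 := ![0, 1, 0, 0, 1, 0, 0, 0]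
def w4 : V 8 := ![0, 1, 0, 0, 0, 1, 0, 0]
def w5 : V 8 := ![0, 0, -1, -1, 0, 0, 0, 0]
def w6 : V 8 := ![0, 0, 0, 0, -1, -1, 0, 0]
def w7 : V 8 := ![1, 0, 0, 0, 0, 0, 1, 0]
def w8 : V 8 := ![0, -1, 0, 0, 0, 0, 1, 0]
def w0 : V 8 := ![1, 1, 0, 0, 0, 0, 0, 0]

def S0 : Set (V 8) := {w1, w2, w3, w4, w5, w6, w7, w8}

lemma eq1 : w0 = (2⁻¹ : ℚ) • (w1 + w2 + w3 + w4 + w5 + w6) := by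
  funext i
  fin_cases i <;> norm_num [w0, w1, w2, w3, w4, w5, w6]

lemma eq2 : w0 = w7 - w8 := by
  funext i
  fin_cases i <;> norm_num [w0, w7, w8]

/-- The parity submonoid used to exclude `w0`. -/
def T : AddSubmonoid (V 8) where
  carrier := {v | 0 ≤ v 6 ∧ (v 6 = 0 → ∃ k : ℤ, v 0 - v 2 - v 3 = 2 * k)}
  zero_mem' := by
    refine ⟨le_refl _, fun _ => ⟨0, by norm_num⟩⟩
  add_mem' := by
    rintro a b ⟨ha6, ha⟩ ⟨hb6, hb⟩
    refine ⟨by simpa using add_nonneg ha6 hb6, fun h => ?_⟩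
    have h' : a 6 + b 6 = 0 := by simpa using h
    have ha0 : a 6 = 0 := le_antisymm (by linarith) ha6
    have hb0 : b 6 = 0 := le_antisymm (by linarith) hb6
    obtain ⟨k, hk⟩ := ha ha0
    obtain ⟨l, hl⟩ := hb hb0
    exact ⟨k + l, by push_cast; simp only [Pi.add_apply]; linarith⟩

lemma S0_sub_T : S0 ⊆ T := by
  rintro v (rfl | rfl | rfl | rfl | rfl | rfl | rfl | rfl)
  · exact ⟨by show (0:ℚ) ≤ 0; norm_num, fun _ => ⟨0, by show (1:ℚ) - 1 - 0 = 2 * (0:ℤ); norm_num⟩⟩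
  · exact ⟨by show (0:ℚ) ≤ 0; norm_num, fun _ => ⟨0, by show (1:ℚ) - 0 - 1 = 2 * (0:ℤ); norm_num⟩⟩
  · exact ⟨by show (0:ℚ) ≤ 0; norm_num, fun _ => ⟨0, by show (0:ℚ) - 0 - 0 = 2 * (0:ℤ); norm_num⟩⟩
  · exact ⟨by show (0:ℚ) ≤ 0; norm_num, fun _ => ⟨0, by show (0:ℚ) - 0 - 0 = 2 * (0:ℤ); norm_num⟩⟩
  · exact ⟨by show (0:ℚ) ≤ 0; norm_num, fun _ => ⟨1, by show (0:ℚ) - (-1) - (-1) = 2 * (1:ℤ); norm_num⟩⟩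
  · exact ⟨by show (0:ℚ) ≤ 0; norm_num, fun _ => ⟨0, by show (0:ℚ) - 0 - 0 = 2 * (0:ℤ); norm_num⟩⟩
  · exact ⟨by show (0:ℚ) ≤ 1; norm_num, fun h => absurd h (by show (1:ℚ) ≠ 0; norm_num)⟩
  · exact ⟨by show (0:ℚ) ≤ 1; norm_num, fun h => absurd h (by show (1:ℚ) ≠ 0; norm_num)⟩

lemma w0_not_mem : w0 ∉ AddSubmonoid.closure S0 := by
  intro h
  have hT : w0 ∈ T := AddSubmonoid.closure_le.2 S0_sub_T h
  obtain ⟨k, hk⟩ := hT.2 (by show (0:ℚ) = 0; rfl)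
  have : (1 : ℚ) = 2 * k := by
    have h1 : w0 0 - w0 2 - w0 3 = 1 := by show (1:ℚ) - 0 - 0 = 1; norm_num
    linarith [hk, h1]
  have h2 : (2 * k : ℚ) = 1 := this.symm
  have : (2 * k : ℤ) = 1 := by exact_mod_cast h2
  omega

/-- The set `{v₁, …, v₈}` is not saturated: `v₀ = (v₁+⋯+v₆)/2 = v₇ - v₈` lies in the
ℤ-linear span and in the ℚ≥0-cone of the set, but is not a ℤ≥0-combination of its
elements. -/
theorem e8_nonsaturated_example :
    w0 = (2⁻¹ : ℚ) • (w1 + w2 + w3 + w4 + w5 + w6) ∧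
    w0 = w7 - w8 ∧
    w0 ∈ Submodule.span ℤ S0 ∧
    InCone S0 w0 ∧
    w0 ∉ AddSubmonoid.closure S0 ∧
    ¬ IsSaturated S0 := by

  have hspan : w0 ∈ Submodule.span ℤ S0 := by
    rw [eq2]
    exact sub_mem (Submodule.subset_span (by simp [S0]))
      (Submodule.subset_span (by simp [S0]))
  have hcone : InCone S0 w0 := by
    refine ⟨{w1, w2, w3, w4, w5, w6}, fun _ => 2⁻¹, ?_, fun x _ => by norm_num, ?_⟩
    · intro x hx
      simp only [Finset.coe_insert, Finset.coe_singleton, Set.mem_insert_iff,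
        Set.mem_singleton_iff] at hx
      rcases hx with rfl|rfl|rfl|rfl|rfl|rfl <;> simp [S0]
    · rw [eq1]
      have d1 : w1 ≠ w2 := by intro h; have := congrFun h 2; simp [w1, w2] at this
      have d2 : w1 ≠ w3 := by intro h; have := congrFun h 0; simp [w1, w3] at this
      have d3 : w1 ≠ w4 := by intro h; have := congrFun h 0; simp [w1, w4] at this
      have d4 : w1 ≠ w5 := by intro h; have := congrFun h 0; simp [w1, w5] at this
      have d5 : w1 ≠ w6 := by intro h; have := congrFun h 0; simp [w1, w6] at this
      have d6 : w2 ≠ w3 := by intro h; have := congrFun h 0; simp [w2, w3] at this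
      have d7 : w2 ≠ w4 := by intro h; have := congrFun h 0; simp [w2, w4] at this
      have d8 : w2 ≠ w5 := by intro h; have := congrFun h 0; simp [w2, w5] at this
      have d9 : w2 ≠ w6 := by intro h; have := congrFun h 0; simp [w2, w6] at this
      have d10 : w3 ≠ w4 := by intro h; have := congrFun h 4; simp [w3, w4] at this
      have d11 : w3 ≠ w5 := by intro h; have := congrFun h 1; simp [w3, w5] at this
      have d12 : w3 ≠ w6 := by intro h; have := congrFun h 1; simp [w3, w6] at this
      have d13 : w4 ≠ w5 := by intro h; have := congrFun h 1; simp [w4, w5] at this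
      have d14 : w4 ≠ w6 := by intro h; have := congrFun h 1; simp [w4, w6] at this
      have d15 : w5 ≠ w6 := by intro h; have := congrFun h 2; simp [w5, w6] at this
      rw [Finset.sum_insert (by simp [d1, d2, d3, d4, d5]),
        Finset.sum_insert (by simp [d6, d7, d8, d9]),
        Finset.sum_insert (by simp [d10, d11, d12]),
        Finset.sum_insert (by simp [d13, d14]),
        Finset.sum_insert (by simp [d15]), Finset.sum_singleton]
      module
  exact ⟨eq1, eq2, hspan, hcone, w0_not_mem,
    fun hsat => w0_not_mem (hsat w0 hspan hcone)⟩


end TorusNormal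
end

section
/- Let Λ0 = {v ∈ ℤ^8 : v1+...+v8 is even} and let λ°=ε1+ε2=(1,1,0,0,0,0,0,0). For every λ ∈ Λ0 with λ ≠ 0, one has λ° ∈ M_E8(λ). -/
namespace TorusNormal

/-- The root system `E₈` in `ℚ^8`: the vectors `±εᵢ±εⱼ` (`i ≠ j`) together with the
vectors `(1/2)·Σ (-1)^{νᵢ} εᵢ` with an even number of minus signs. -/
def e8roots : Set (V 8) :=
  {x | (∃ i j : Fin 8, i ≠ j ∧ ∃ a b : ℚ, (a = 1 ∨ a = -1) ∧ (b = 1 ∨ b = -1) ∧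
          x = a • (Pi.single i 1 : V 8) + b • (Pi.single j 1 : V 8)) ∨
       (∃ s : Fin 8 → ℚ, (∀ i, s i = 1 ∨ s i = -1) ∧
          Even (Finset.univ.filter (fun i => s i = -1)).card ∧ x = (2⁻¹ : ℚ) • s)}

/-- `Λ₀`: the integer vectors in `ℚ^8` whose coordinate sum is even. -/
def LambdaZero : Set (V 8) :=
  {v | (∀ i, ∃ m : ℤ, v i = (m : ℚ)) ∧ ∃ m : ℤ, (∑ i, v i) = 2 * (m : ℚ)}

/-- `Λ₁ = Λ₀ + (1/2)(1,1,1,1,1,1,1,1)`. -/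
def LambdaOne : Set (V 8) :=
  {v | ∃ w ∈ LambdaZero, v = w + fun _ => (1 / 2 : ℚ)}

/-- `λ° = ε₁ + ε₂`. -/
def lamCirc : V 8 := ![1, 1, 0, 0, 0, 0, 0, 0]

-- basic dot lemmas
lemma dot_comm {n : ℕ} (x y : V n) : dot x y = dot y x := by
  simp [dot, mul_comm]

lemma dot_add_left {n : ℕ} (x y α : V n) : dot (x + y) α = dot x α + dot y α := by
  rw [dot_comm, dot_add_right, dot_comm α x, dot_comm α y]

lemma dot_smul_left {n : ℕ} (c : ℚ) (x α : V n) : dot (c • x) α = c * dot x α := by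
  rw [dot_comm, dot_smul_right, dot_comm]

lemma dot_single_right {n : ℕ} (x : V n) (i : Fin n) : dot x (Pi.single i 1) = x i := by
  simp [dot, Pi.single_apply]

lemma dot_single_left {n : ℕ} (x : V n) (i : Fin n) : dot (Pi.single i 1) x = x i := by
  rw [dot_comm, dot_single_right]

-- reflection is an involution when ‖α‖² = 2
lemma reflLin_apply {n : ℕ} (α x : V n) :
    reflLin α x = x - ((2 * dot α x) / dot α α) • α := rfl

lemma reflLin_apply_two {n : ℕ} (α : V n) (h : dot α α = 2) (x : V n) :
    reflLin α x = x - dot α x • α := by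
  rw [reflLin_apply, h]
  norm_num

lemma reflLin_invol {n : ℕ} (α : V n) (h : dot α α = 2) (x : V n) :
    reflLin α (reflLin α x) = x := by
  rw [reflLin_apply_two α h, reflLin_apply_two α h]
  have hd : dot α (x - dot α x • α) = - dot α x := by
    rw [sub_eq_add_neg, ← neg_one_smul ℚ (dot α x • α), smul_smul, dot_add_right,
      dot_smul_right, h]
    ring
  rw [hd]
  module

/-- The reflection as a unit of the endomorphism ring. -/
def reflUnit {n : ℕ} (α : V n) (h : dot α α = 2) : (Module.End ℚ (V n))ˣ where
  val := reflLin α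
  inv := reflLin α
  val_inv := LinearMap.ext fun x => reflLin_invol α h x
  inv_val := LinearMap.ext fun x => reflLin_invol α h x

lemma reflUnit_mem {n : ℕ} {Φ : Set (V n)} {α : V n} (hα : α ∈ Φ) (h : dot α α = 2) :
    reflUnit α h ∈ weylGroup Φ :=
  Subgroup.subset_closure ⟨α, hα, rfl⟩

lemma self_mem_orbit {n : ℕ} (Φ : Set (V n)) (l : V n) : l ∈ weylOrbit Φ l :=
  ⟨1, one_mem _, rfl⟩

lemma orbit_refl_step {n : ℕ} {Φ : Set (V n)} {α : V n} (hα : α ∈ Φ) (h : dot α α = 2)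
    {l x : V n} (hx : x ∈ weylOrbit Φ l) : reflLin α x ∈ weylOrbit Φ l := by
  obtain ⟨g, hg, rfl⟩ := hx
  refine ⟨reflUnit α h * g, mul_mem (reflUnit_mem hα h) hg, ?_⟩
  simp [reflUnit, Units.val_mul, Module.End.mul_apply]
/-- The `±εᵢ±εⱼ`-type roots. -/
lemma root1_mem {i j : Fin 8} (hij : i ≠ j) {a b : ℚ}
    (ha : a = 1 ∨ a = -1) (hb : b = 1 ∨ b = -1) :
    a • (Pi.single i 1 : V 8) + b • (Pi.single j 1 : V 8) ∈ e8roots :=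
  Or.inl ⟨i, j, hij, a, b, ha, hb, rfl⟩

lemma root1_dot_left {i j : Fin 8} (hij : i ≠ j) (a b : ℚ) (x : V 8) :
    dot (a • (Pi.single i 1 : V 8) + b • (Pi.single j 1 : V 8)) x = a * x i + b * x j := by
  rw [dot_add_left, dot_smul_left, dot_smul_left, dot_single_left, dot_single_left]

lemma root1_dot_self {i j : Fin 8} (hij : i ≠ j) {a b : ℚ}
    (ha : a = 1 ∨ a = -1) (hb : b = 1 ∨ b = -1) :
    dot (a • (Pi.single i 1 : V 8) + b • (Pi.single j 1 : V 8))
        (a • (Pi.single i 1 : V 8) + b • (Pi.single j 1 : V 8)) = 2 := by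
  rw [root1_dot_left hij]
  simp only [Pi.add_apply, Pi.smul_apply, Pi.single_apply, smul_eq_mul]
  rw [if_neg hij.symm, if_neg hij]
  simp only [if_true]
  rcases ha with rfl | rfl <;> rcases hb with rfl | rfl <;> norm_num

/-- one reflection step along a `±εᵢ±εⱼ` root, with coefficient precomputed. -/
lemma orbit_step {s t : Fin 8} (hst : s ≠ t) {c d : ℚ}
    (hc : c = 1 ∨ c = -1) (hd : d = 1 ∨ d = -1) {l x y : V 8}
    (hx : x ∈ weylOrbit e8roots l) {e : ℚ}
    (he : c * x s + d * x t = e)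
    (hy : y = x - e • (c • (Pi.single s 1 : V 8) + d • (Pi.single t 1 : V 8))) :
    y ∈ weylOrbit e8roots l := by
  have h2 := root1_dot_self hst hc hd
  have := orbit_refl_step (root1_mem hst hc hd) h2 hx
  rwa [reflLin_apply_two _ h2, root1_dot_left hst, he, ← hy] at this
lemma lamCirc_eq : lamCirc = Pi.single (0 : Fin 8) 1 + Pi.single (1 : Fin 8) 1 := by
  funext k
  fin_cases k <;> simp (config := { decide := true }) [lamCirc, Pi.single_apply]

/-- final hop when `x = ε₀ + b·ε_q`. -/
lemma trans_A {l : V 8} (q : Fin 8) (h0 : q ≠ 0) (h1 : q ≠ 1) {b : ℚ}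
    (hb : b = 1 ∨ b = -1) {x : V 8} (hx : x ∈ weylOrbit e8roots l)
    (hxe : x = (Pi.single 0 1 : V 8) + b • (Pi.single q 1 : V 8)) :
    lamCirc ∈ weylOrbit e8roots l := by
  refine orbit_step (s := 1) (t := q) (Ne.symm h1) (c := -1) (Or.inr rfl) hb hx (e := 1) ?_ ?_
  · subst hxe
    rcases hb with rfl | rfl <;>
      simp [Pi.single_apply, Ne.symm h1, Ne.symm h0, (by decide : (1 : Fin 8) ≠ 0)]
  · rw [hxe, lamCirc_eq]; module

/-- final hop when `x = ε₁ + b·ε_q`. -/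
lemma trans_A' {l : V 8} (q : Fin 8) (h0 : q ≠ 0) (h1 : q ≠ 1) {b : ℚ}
    (hb : b = 1 ∨ b = -1) {x : V 8} (hx : x ∈ weylOrbit e8roots l)
    (hxe : x = (Pi.single 1 1 : V 8) + b • (Pi.single q 1 : V 8)) :
    lamCirc ∈ weylOrbit e8roots l := by
  refine orbit_step (s := 0) (t := q) (Ne.symm h0) (c := -1) (Or.inr rfl) hb hx (e := 1) ?_ ?_
  · subst hxe
    rcases hb with rfl | rfl <;>
      simp [Pi.single_apply, Ne.symm h1, Ne.symm h0, (by decide : (0 : Fin 8) ≠ 1)]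
  · rw [hxe, lamCirc_eq]; module

lemma trans_B {l : V 8} (q : Fin 8) (h0 : q ≠ 0) (h1 : q ≠ 1) {b : ℚ}
    (hb : b = 1 ∨ b = -1) {x : V 8} (hx : x ∈ weylOrbit e8roots l)
    (hxe : x = -(Pi.single 0 1 : V 8) + b • (Pi.single q 1 : V 8)) :
    lamCirc ∈ weylOrbit e8roots l := by
  have hb' : -b = 1 ∨ -b = -1 := by rcases hb with rfl | rfl <;> norm_num
  have step : (Pi.single 0 1 : V 8) + (-b) • (Pi.single q 1 : V 8) ∈ weylOrbit e8roots l := by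
    refine orbit_step (s := 0) (t := q) (Ne.symm h0) (c := 1) (Or.inl rfl) hb' hx (e := -2) ?_ ?_
    · subst hxe
      rcases hb with rfl | rfl <;>
        simp [Pi.single_apply, Ne.symm h1, Ne.symm h0] <;> norm_num
    · rw [hxe]; module
  exact trans_A q h0 h1 hb' step rfl

lemma trans_B' {l : V 8} (q : Fin 8) (h0 : q ≠ 0) (h1 : q ≠ 1) {b : ℚ}
    (hb : b = 1 ∨ b = -1) {x : V 8} (hx : x ∈ weylOrbit e8roots l)
    (hxe : x = -(Pi.single 1 1 : V 8) + b • (Pi.single q 1 : V 8)) :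
    lamCirc ∈ weylOrbit e8roots l := by
  have hb' : -b = 1 ∨ -b = -1 := by rcases hb with rfl | rfl <;> norm_num
  have step : (Pi.single 1 1 : V 8) + (-b) • (Pi.single q 1 : V 8) ∈ weylOrbit e8roots l := by
    refine orbit_step (s := 1) (t := q) (Ne.symm h1) (c := 1) (Or.inl rfl) hb' hx (e := -2) ?_ ?_
    · subst hxe
      rcases hb with rfl | rfl <;>
        simp [Pi.single_apply, Ne.symm h1, Ne.symm h0] <;> norm_num
    · rw [hxe]; module
  exact trans_A' q h0 h1 hb' step rfl

/-- the case `x = ±ε₀ ± ε₁`. -/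
lemma trans_C {l x : V 8} {a b : ℚ} (ha : a = 1 ∨ a = -1) (hb : b = 1 ∨ b = -1)
    (hx : x ∈ weylOrbit e8roots l)
    (hxe : x = a • (Pi.single 0 1 : V 8) + b • (Pi.single 1 1 : V 8)) :
    lamCirc ∈ weylOrbit e8roots l := by
  have e01 : (0 : Fin 8) ≠ 1 := by decide
  have e02 : (0 : Fin 8) ≠ 2 := by decide
  have e12 : (1 : Fin 8) ≠ 2 := by decide
  rcases ha with rfl | rfl <;> rcases hb with rfl | rfl
  · rw [show lamCirc = x by rw [hxe, lamCirc_eq]; module]; exact hx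
  · have step : (Pi.single 0 1 : V 8) + (1 : ℚ) • (Pi.single 2 1 : V 8) ∈ weylOrbit e8roots l := by
      refine orbit_step e12 (Or.inl rfl) (Or.inl rfl) hx (e := -1) ?_ ?_
      · subst hxe
        simp (config := { decide := true }) [Pi.single_apply]
        try norm_num
      · rw [hxe]; module
    exact trans_A 2 (Ne.symm e02) (Ne.symm e12) (Or.inl rfl) step rfl
  · have step : (Pi.single 1 1 : V 8) + (1 : ℚ) • (Pi.single 2 1 : V 8) ∈ weylOrbit e8roots l := by
      refine orbit_step e02 (Or.inl rfl) (Or.inl rfl) hx (e := -1) ?_ ?_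
      · subst hxe
        simp (config := { decide := true }) [Pi.single_apply]
        try norm_num
      · rw [hxe]; module
    exact trans_A' 2 (Ne.symm e02) (Ne.symm e12) (Or.inl rfl) step rfl
  · refine orbit_step e01 (Or.inl rfl) (Or.inl rfl) hx (e := -2) ?_ ?_
    · subst hxe
      simp (config := { decide := true }) [Pi.single_apply]
      try norm_num
    · rw [hxe, lamCirc_eq]; module

/-- `λ°` lies in the Weyl orbit of every `±εᵢ±εⱼ` root. -/
lemma theta_mem_orbit_root (i j : Fin 8) (hij : i ≠ j) {a b : ℚ}
    (ha : a = 1 ∨ a = -1) (hb : b = 1 ∨ b = -1) :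
    lamCirc ∈ weylOrbit e8roots (a • (Pi.single i 1 : V 8) + b • (Pi.single j 1 : V 8)) := by
  set l : V 8 := a • (Pi.single i 1 : V 8) + b • (Pi.single j 1 : V 8) with hl
  have hself : l ∈ weylOrbit e8roots l := self_mem_orbit _ _
  have hcomm : l = b • (Pi.single j 1 : V 8) + a • (Pi.single i 1 : V 8) := by rw [hl]; module
  have main01 : ∀ (p q : Fin 8), q ≠ 0 → q ≠ 1 → ∀ a' b' : ℚ, a' = 1 ∨ a' = -1 →
      (b' = 1 ∨ b' = -1) → l = a' • (Pi.single p 1 : V 8) + b' • (Pi.single q 1 : V 8) →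
      (p = 0 ∨ p = 1) → lamCirc ∈ weylOrbit e8roots l := by
    intro p q hq0 hq1 a' b' ha' hb' hle hp
    rcases hp with rfl | rfl
    · rcases ha' with rfl | rfl
      · exact trans_A q hq0 hq1 hb' hself (by rw [hle]; module)
      · exact trans_B q hq0 hq1 hb' hself (by rw [hle]; module)
    · rcases ha' with rfl | rfl
      · exact trans_A' q hq0 hq1 hb' hself (by rw [hle]; module)
      · exact trans_B' q hq0 hq1 hb' hself (by rw [hle]; module)
  by_cases hi0 : i = 0
  · subst hi0
    by_cases hj1 : j = 1
    · subst hj1; exact trans_C ha hb hself hl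
    · exact main01 0 j (Ne.symm hij) hj1 a b ha hb hl (Or.inl rfl)
  · by_cases hi1 : i = 1
    · subst hi1
      by_cases hj0 : j = 0
      · subst hj0; exact trans_C hb ha hself hcomm
      · exact main01 1 j hj0 (Ne.symm hij) a b ha hb hl (Or.inr rfl)
    · by_cases hj0 : j = 0
      · subst hj0; exact main01 0 i hi0 hi1 b a hb ha hcomm (Or.inl rfl)
      · by_cases hj1 : j = 1
        · subst hj1; exact main01 1 i hi0 hi1 b a hb ha hcomm (Or.inr rfl)
        · have hma : -a = 1 ∨ -a = -1 := by rcases ha with rfl | rfl <;> norm_num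
          have step : (Pi.single 0 1 : V 8) + b • (Pi.single j 1 : V 8) ∈ weylOrbit e8roots l := by
            refine orbit_step (s := 0) (t := i) (Ne.symm hi0) (c := 1) (Or.inl rfl) hma
              hself (e := -1) ?_ ?_
            · rw [hl]
              rcases ha with rfl | rfl <;> rcases hb with rfl | rfl <;>
                simp [Pi.single_apply, hi0, hij, Ne.symm hij, hj0]
            · rw [hl]; module
          exact trans_A j hj0 hj1 hb step rfl
lemma orbit_subset_polytope {n : ℕ} (Φ : Set (V n)) (l : V n) :
    weylOrbit Φ l ⊆ weightPolytope Φ l :=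
  subset_convexHull ℚ _

lemma polytope_smul {n : ℕ} {Φ : Set (V n)} {l : V n} {g : (Module.End ℚ (V n))ˣ}
    (hg : g ∈ weylGroup Φ) {x : V n} (hx : x ∈ weightPolytope Φ l) :
    g.val x ∈ weightPolytope Φ l := by
  have himg : (g.val : Module.End ℚ (V n)) '' weightPolytope Φ l ⊆ weightPolytope Φ l := by
    rw [weightPolytope, (g.val : Module.End ℚ (V n)).image_convexHull]
    apply convexHull_mono
    rintro _ ⟨y, ⟨g', hg', rfl⟩, rfl⟩
    exact ⟨g * g', mul_mem hg hg', by simp [Units.val_mul, Module.End.mul_apply]⟩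
  exact himg ⟨x, hx, rfl⟩

lemma polytope_mono {n : ℕ} {Φ : Set (V n)} {l μ : V n} (hμ : μ ∈ weightPolytope Φ l) :
    weightPolytope Φ μ ⊆ weightPolytope Φ l := by
  apply convexHull_min _ (convex_convexHull ℚ _)
  rintro _ ⟨g, hg, rfl⟩
  exact polytope_smul hg hμ

/-- walking down: `l - α ∈ P(l)` when `α` is a norm-2 root with `(α, l) ≥ 2`. -/
lemma sub_root_mem_polytope {Φ : Set (V 8)} {l α : V 8} (hα : α ∈ Φ) (h2 : dot α α = 2)
    (hk : 2 ≤ dot α l) : l - α ∈ weightPolytope Φ l := by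
  set k := dot α l with hkdef
  have hk0 : k ≠ 0 := by positivity
  have h1 : l ∈ weightPolytope Φ l := orbit_subset_polytope Φ l (self_mem_orbit Φ l)
  have h2' : reflLin α l ∈ weightPolytope Φ l :=
    orbit_subset_polytope Φ l (orbit_refl_step hα h2 (self_mem_orbit Φ l))
  have hconv := (convex_convexHull ℚ (weylOrbit Φ l)) h1 h2'
    (show (0:ℚ) ≤ 1 - 1/k by
      have : (1:ℚ)/k ≤ 1/2 := by
        apply one_div_le_one_div_of_le <;> norm_num <;> linarith
      linarith)
    (show (0:ℚ) ≤ 1/k by positivity)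
    (by field_simp; ring)
  have heq : (1 - 1/k) • l + (1/k) • reflLin α l = l - α := by
    rw [reflLin_apply_two α h2, ← hkdef]
    rw [smul_sub, smul_smul, show (1/k) * k = 1 by field_simp]
    module
  rwa [heq] at hconv
lemma dot_neg_right {n : ℕ} (α x : V n) : dot α (-x) = - dot α x := by
  rw [show -x = (-1 : ℚ) • x by module, dot_smul_right]; ring

lemma dot_sub_right {n : ℕ} (α x y : V n) : dot α (x - y) = dot α x - dot α y := by
  rw [sub_eq_add_neg, dot_add_right, dot_neg_right, sub_eq_add_neg]

lemma dot_sub_left {n : ℕ} (x y α : V n) : dot (x - y) α = dot x α - dot y α := by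
  rw [dot_comm, dot_sub_right, dot_comm α x, dot_comm α y]

lemma int_even_mem_span (v : V 8) (m : Fin 8 → ℤ) (hv : ∀ i, v i = m i) (M : ℤ)
    (hs : ∑ i, m i = 2 * M) : v ∈ Submodule.span ℤ e8roots := by
  have hg : ∀ i : Fin 8, ((Pi.single i 1 - Pi.single 0 1 : V 8)) ∈ Submodule.span ℤ e8roots := by
    intro i
    by_cases h : i = 0
    · subst h; simp
    · apply Submodule.subset_span
      have he : (Pi.single i 1 - Pi.single 0 1 : V 8)
          = (1:ℚ) • (Pi.single i 1 : V 8) + (-1:ℚ) • (Pi.single 0 1 : V 8) := by module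
      rw [he]; exact root1_mem h (Or.inl rfl) (Or.inr rfl)
  have hgp : ((Pi.single 0 1 + Pi.single 1 1 : V 8)) ∈ Submodule.span ℤ e8roots := by
    apply Submodule.subset_span
    have he : (Pi.single 0 1 + Pi.single 1 1 : V 8)
        = (1:ℚ) • (Pi.single 0 1 : V 8) + (1:ℚ) • (Pi.single 1 1 : V 8) := by module
    rw [he]; exact root1_mem (by decide) (Or.inl rfl) (Or.inl rfl)
  have hgm : ((Pi.single 0 1 - Pi.single 1 1 : V 8)) ∈ Submodule.span ℤ e8roots := by
    apply Submodule.subset_span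
    have he : (Pi.single 0 1 - Pi.single 1 1 : V 8)
        = (1:ℚ) • (Pi.single 0 1 : V 8) + (-1:ℚ) • (Pi.single 1 1 : V 8) := by module
    rw [he]; exact root1_mem (by decide) (Or.inl rfl) (Or.inr rfl)
  have key : v = (∑ i, m i • (Pi.single i 1 - Pi.single 0 1 : V 8))
      + M • (Pi.single 0 1 + Pi.single 1 1 : V 8)
      + M • (Pi.single 0 1 - Pi.single 1 1 : V 8) := by
    funext k
    have hs' : ((m 0 + m 1 + m 2 + m 3 + m 4 + m 5 + m 6 + m 7 : ℤ) : ℚ) = 2 * (M : ℚ) := by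
      rw [Fin.sum_univ_eight] at hs; rw [hs]; push_cast; ring
    push_cast at hs'
    simp only [Pi.add_apply, Finset.sum_apply, Fin.sum_univ_eight, Pi.smul_apply, Pi.sub_apply,
      hv k]
    fin_cases k <;>
      simp (config := { decide := true }) only [Pi.single_apply, if_true, if_false,
        zsmul_eq_mul, smul_eq_mul] <;>
      push_cast <;> linarith [hs']
  rw [key]
  exact add_mem (add_mem (Submodule.sum_mem _ fun i _ => Submodule.smul_mem _ _ (hg i))
    (Submodule.smul_mem _ _ hgp)) (Submodule.smul_mem _ _ hgm)

lemma exists_big (m : Fin 8 → ℤ) (hm : m ≠ 0) (M : ℤ) (hs : ∑ i, m i = 2 * M) :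
    ∃ i j : Fin 8, i ≠ j ∧ ∃ a b : ℤ, (a = 1 ∨ a = -1) ∧ (b = 1 ∨ b = -1) ∧
      2 ≤ a * m i + b * m j := by
  obtain ⟨i, hi⟩ := Function.ne_iff.mp hm
  simp only [Pi.zero_apply] at hi
  by_cases hj : ∃ j, j ≠ i ∧ m j ≠ 0
  · obtain ⟨j, hji, hjne⟩ := hj
    refine ⟨i, j, Ne.symm hji, if 0 ≤ m i then 1 else -1, if 0 ≤ m j then 1 else -1, ?_, ?_, ?_⟩
    · split <;> simp
    · split <;> simp
    · split <;> split <;> omega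
  · push_neg at hj
    have hsum : ∑ k, m k = m i := by
      apply Finset.sum_eq_single i (fun k _ hk => hj k hk) (by simp)
    refine ⟨i, if i = 0 then 1 else 0, ?_, if 0 ≤ m i then 1 else -1, 1, ?_, Or.inl rfl, ?_⟩
    · split <;> simp_all <;> omega
    · split <;> simp
    · rw [show m (if i = 0 then 1 else 0) = 0 from hj _ (by split <;> simp_all <;> omega)]
      rw [hsum] at hs
      split <;> omega
lemma main_induction (N : ℕ) : ∀ l : V 8, ∀ m : Fin 8 → ℤ, (∀ i, l i = m i) →
    (∃ M : ℤ, ∑ i, m i = 2 * M) → l ≠ 0 → dot l l = N →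
    lamCirc ∈ weightPolytope e8roots l := by
  induction N using Nat.strong_induction_on with
  | _ N ih =>
  intro l m hm hsum hne hN
  obtain ⟨M, hM⟩ := hsum
  have hm0 : m ≠ 0 := by
    intro h
    apply hne
    funext i
    rw [hm i, h]; simp
  obtain ⟨i, j, hij, a, b, ha, hb, hbig⟩ := exists_big m hm0 M hM
  have ha' : ((a : ℚ)) = 1 ∨ ((a : ℚ)) = -1 := by rcases ha with rfl | rfl <;> norm_num
  have hb' : ((b : ℚ)) = 1 ∨ ((b : ℚ)) = -1 := by rcases hb with rfl | rfl <;> norm_num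
  set α : V 8 := (a : ℚ) • (Pi.single i 1 : V 8) + (b : ℚ) • (Pi.single j 1 : V 8) with hα
  have hαmem : α ∈ e8roots := root1_mem hij ha' hb'
  have hα2 : dot α α = 2 := root1_dot_self hij ha' hb'
  have hdot : dot α l = ((a * m i + b * m j : ℤ) : ℚ) := by
    rw [hα, root1_dot_left hij, hm i, hm j]; push_cast; ring
  have hk : 2 ≤ dot α l := by
    rw [hdot]; exact_mod_cast hbig
  by_cases hμ0 : l - α = 0
  · have hlα : l = α := by rwa [sub_eq_zero] at hμ0
    refine orbit_subset_polytope _ _ ?_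
    rw [hlα]
    exact theta_mem_orbit_root i j hij ha' hb'
  · set μ : V 8 := l - α with hμ
    have hμP : μ ∈ weightPolytope e8roots l := sub_root_mem_polytope hαmem hα2 hk
    set m' : Fin 8 → ℤ :=
      fun k => m k - (if k = i then a else 0) - (if k = j then b else 0) with hm'def
    have hαk : ∀ k, α k = ((if k = i then a else 0) + (if k = j then b else 0) : ℤ) := by
      intro k
      rw [hα]
      simp only [Pi.add_apply, Pi.smul_apply, Pi.single_apply, smul_eq_mul]
      push_cast
      by_cases h1 : k = i <;> by_cases h2 : k = j <;> simp [h1, h2]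
    have hm' : ∀ k, μ k = m' k := by
      intro k
      rw [hμ, hm'def]
      simp only [Pi.sub_apply, hm k, hαk k]
      push_cast
      ring
    have hsum'' : ∑ k, m' k = 2 * M - a - b := by
      rw [hm'def]
      simp only [Finset.sum_sub_distrib, Finset.sum_ite_eq', Finset.mem_univ, if_true, hM]
      try ring
    have hsum' : ∃ M' : ℤ, ∑ k, m' k = 2 * M' := by
      rcases ha with rfl | rfl <;> rcases hb with rfl | rfl
      · exact ⟨M - 1, by omega⟩
      · exact ⟨M, by omega⟩
      · exact ⟨M, by omega⟩
      · exact ⟨M + 1, by omega⟩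
    -- the norm strictly decreases
    have hdd : dot μ μ = dot l l - 2 * dot α l + 2 := by
      rw [hμ, dot_sub_right, dot_sub_left, dot_sub_left, hα2, dot_comm l α]
      ring
    set N' : ℤ := ∑ k, m' k * m' k with hN'
    have hN'eq : dot μ μ = (N' : ℚ) := by
      rw [hN', dot]
      push_cast
      exact Finset.sum_congr rfl fun k _ => by rw [hm' k]
    have hN'nonneg : 0 ≤ N' := Finset.sum_nonneg fun k _ => mul_self_nonneg _
    have hlt : N'.toNat < N := by
      have h1 : (N' : ℚ) ≤ (N : ℚ) - 2 := by
        rw [← hN'eq, hdd, hN]; linarith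
      have h2 : N' ≤ (N : ℤ) - 2 := by exact_mod_cast h1
      omega
    have hμne : μ ≠ 0 := by
      rw [hμ]; exact hμ0
    have := ih N'.toNat hlt μ m' hm' hsum' hμne
      (by rw [hN'eq]; congr 1; exact_mod_cast (Int.toNat_of_nonneg hN'nonneg).symm)
    exact polytope_mono hμP this

/-- For every nonzero `λ ∈ Λ₀`, the weight `λ° = ε₁ + ε₂` belongs to `M_{E₈}(λ)`. -/
theorem e8_lamCirc_mem_of_integer (l : V 8) (hl : l ∈ LambdaZero) (hne : l ≠ 0) :
    lamCirc ∈ Mset e8roots l := by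
  obtain ⟨hint, M, hM⟩ := hl
  choose m hm using hint
  have hMint : ∑ i, m i = 2 * M := by
    have : ((∑ i, m i : ℤ) : ℚ) = ((2 * M : ℤ) : ℚ) := by
      push_cast
      rw [← hM]
      exact (Finset.sum_congr rfl fun i _ => (hm i).symm)
    exact_mod_cast this
  constructor
  · -- lamCirc - l ∈ span ℤ e8roots
    set mv : Fin 8 → ℤ :=
      fun k => (if k = 0 then 1 else 0) + (if k = 1 then 1 else 0) - m k with hmv
    apply int_even_mem_span _ mv ?_ (1 - M)
    · rw [hmv]
      simp only [Finset.sum_sub_distrib, Finset.sum_add_distrib, Finset.sum_ite_eq',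
        Finset.mem_univ, if_true, hMint]
      ring
    · intro k
      rw [hmv]
      simp only [Pi.sub_apply, hm k]
      fin_cases k <;> simp (config := { decide := true }) [lamCirc] <;> norm_num
  · -- lamCirc ∈ weightPolytope
    have hdot : dot l l = ((∑ i, m i * m i : ℤ) : ℚ) := by
      rw [dot]; push_cast
      exact Finset.sum_congr rfl fun k _ => by rw [hm k]
    have hnn : (0 : ℤ) ≤ ∑ i, m i * m i := Finset.sum_nonneg fun k _ => mul_self_nonneg _
    exact main_induction (∑ i, m i * m i).toNat l m hm ⟨M, hMint⟩ hne
      (by rw [hdot]; congr 1; exact_mod_cast (Int.toNat_of_nonneg hnn).symm)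

end TorusNormal
end

section
/- The subset {v1,...,v6} of ℚ^8, where v1=(1,0,0,-1,0,0,0,0), v2=(0,1,0,0,-1,0,0,0), v3=(0,0,1,0,0,1,0,0), v4=(0,0,0,0,0,0,1,1), v5=(0,0,0,1,1,0,0,0), v6=(1/2,1/2,1/2,1/2,1/2,1/2,1/2,1/2), is not saturated: the vector v0=(1/2)(1,1,1,-1,-1,1,1,1) satisfies v0 = (v1+v2+v3+v4)/2 = v6 - v5, so v0 lies in the ℤ-linear span and in the ℚ≥0-cone of {v1,...,v6}, yet v0 is not a ℤ≥0-linear combination of v1,...,v6. -/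
namespace TorusNormal

def u1 : V 8 := ![1, 0, 0, -1, 0, 0, 0, 0]
def u2 : V 8 := ![0, 1, 0, 0, -1, 0, 0, 0]
def u3 : V 8 := ![0, 0, 1, 0, 0, 1, 0, 0]
def u4 : V 8 := ![0, 0, 0, 0, 0, 0, 1, 1]
def u5 : V 8 := ![0, 0, 0, 1, 1, 0, 0, 0]
def u6 : V 8 := ![1/2, 1/2, 1/2, 1/2, 1/2, 1/2, 1/2, 1/2]
def u0 : V 8 := ![1/2, 1/2, 1/2, -1/2, -1/2, 1/2, 1/2, 1/2]

def S6 : Set (V 8) := {u1, u2, u3, u4, u5, u6}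

lemma u0_eq_half : u0 = (2⁻¹ : ℚ) • (u1 + u2 + u3 + u4) := by
  funext i
  fin_cases i <;> norm_num [u0, u1, u2, u3, u4, Matrix.cons_val_succ]

lemma u0_eq_sub : u0 = u6 - u5 := by
  funext i
  fin_cases i <;> norm_num [u0, u5, u6, Matrix.cons_val_succ]

lemma ne12 : u1 ≠ u2 := by
  intro h; have := congrFun h 0; simp [u1, u2] at this
lemma ne13 : u1 ≠ u3 := by
  intro h; have := congrFun h 0; simp [u1, u3] at this
lemma ne14 : u1 ≠ u4 := by
  intro h; have := congrFun h 0; simp [u1, u4] at this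
lemma ne23 : u2 ≠ u3 := by
  intro h; have := congrFun h 1; simp [u2, u3] at this
lemma ne24 : u2 ≠ u4 := by
  intro h; have := congrFun h 1; simp [u2, u4] at this
lemma ne34 : u3 ≠ u4 := by
  intro h; have := congrFun h 2; simp [u3, u4] at this

/-- invariant preserved by the monoid generated by `S6`. -/
lemma closure_invariant : ∀ v ∈ AddSubmonoid.closure S6,
    ∃ s t : ℕ, (∑ i, v i) = 2 * s ∧ 2 * v 0 = t ∧ (Odd t → 2 ≤ s) := by
  intro v hv
  induction hv using AddSubmonoid.closure_induction with
  | mem x hx =>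
    rcases hx with h | h | h | h | h | h <;> subst h
    · exact ⟨0, 2, by norm_num [u1, Fin.sum_univ_succ], by norm_num [u1], by decide⟩
    · exact ⟨0, 0, by norm_num [u2, Fin.sum_univ_succ], by norm_num [u2], by decide⟩
    · exact ⟨1, 0, by norm_num [u3, Fin.sum_univ_succ], by norm_num [u3], by decide⟩
    · exact ⟨1, 0, by norm_num [u4, Fin.sum_univ_succ], by norm_num [u4], by decide⟩
    · exact ⟨1, 0, by norm_num [u5, Fin.sum_univ_succ], by norm_num [u5], by decide⟩
    · exact ⟨2, 1, by norm_num [u6, Fin.sum_univ_succ], by norm_num [u6], fun _ => le_refl 2⟩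
  | zero => exact ⟨0, 0, by simp, by simp, by decide⟩
  | add x y hx hy ihx ihy =>
    obtain ⟨s1, t1, hs1, ht1, ho1⟩ := ihx
    obtain ⟨s2, t2, hs2, ht2, ho2⟩ := ihy
    refine ⟨s1 + s2, t1 + t2, ?_, ?_, ?_⟩
    · simp only [Pi.add_apply, Finset.sum_add_distrib, hs1, hs2]
      push_cast; ring
    · simp only [Pi.add_apply]
      rw [mul_add, ht1, ht2]; push_cast; ring
    · intro h
      rcases Nat.even_or_odd t1 with he1 | ho1'
      · have ho2' : Odd t2 := by
          rcases Nat.even_or_odd t2 with he2 | h2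
          · exact absurd (Even.add he1 he2) (Nat.not_even_iff_odd.mpr h)
          · exact h2
        exact le_trans (ho2 ho2') (Nat.le_add_left _ _)
      · exact le_trans (ho1 ho1') (Nat.le_add_right _ _)

lemma u0_not_mem : u0 ∉ AddSubmonoid.closure S6 := by
  intro hmem
  obtain ⟨s, t, hs, ht, ho⟩ := closure_invariant u0 hmem
  have hsum : (∑ i, u0 i) = 2 := by norm_num [u0, Fin.sum_univ_succ]
  have h0 : 2 * u0 0 = 1 := by norm_num [u0]
  rw [hsum] at hs
  rw [h0] at ht
  have hs' : s = 1 := by exact_mod_cast (by linarith : (s : ℚ) = 1)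
  have ht' : t = 1 := by exact_mod_cast ht.symm
  subst hs'; subst ht'
  exact absurd (ho ⟨0, rfl⟩) (by norm_num)

/-- The set `{v₁, …, v₆}` is not saturated: `v₀ = (v₁+v₂+v₃+v₄)/2 = v₆ - v₅` lies in the
ℤ-linear span and in the ℚ≥0-cone of the set, but is not a ℤ≥0-combination of its
elements. -/
theorem e7_nonsaturated_example_lattice :
    u0 = (2⁻¹ : ℚ) • (u1 + u2 + u3 + u4) ∧
    u0 = u6 - u5 ∧
    u0 ∈ Submodule.span ℤ S6 ∧
    InCone S6 u0 ∧
    u0 ∉ AddSubmonoid.closure S6 ∧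
    ¬ IsSaturated S6 := by
  have h5 : u5 ∈ S6 := by simp [S6]
  have h6 : u6 ∈ S6 := by simp [S6]
  have hspan : u0 ∈ Submodule.span ℤ S6 := by
    rw [u0_eq_sub]
    exact Submodule.sub_mem _ (Submodule.subset_span h6) (Submodule.subset_span h5)
  have hcone : InCone S6 u0 := by
    refine ⟨{u1, u2, u3, u4}, fun _ => 2⁻¹, ?_, fun _ _ => by norm_num, ?_⟩
    · intro x hx
      simp only [Finset.coe_insert, Finset.coe_singleton, Set.mem_insert_iff,
        Set.mem_singleton_iff] at hx
      rcases hx with h | h | h | h <;> subst h <;> simp [S6]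
    · rw [Finset.sum_insert (by simp [ne12, ne13, ne14]),
        Finset.sum_insert (by simp [ne23, ne24]),
        Finset.sum_insert (by simp [ne34]), Finset.sum_singleton]
      rw [u0_eq_half, smul_add, smul_add, smul_add]
      abel
  refine ⟨u0_eq_half, u0_eq_sub, hspan, hcone, u0_not_mem, ?_⟩
  intro hsat
  exact u0_not_mem (hsat u0 hspan hcone)

end TorusNormal
end

section
/- The subset {v1,...,v12} of ℚ^8, where v1=(-1/2,1/2,1/2,1/2,1/2,1/2,0,0), v2=(1/2,-1/2,1/2,1/2,1/2,1/2,0,0), v3=(1/2,1/2,-1/2,1/2,1/2,1/2,0,0), v4=(1/2,1/2,1/2,-1/2,1/2,1/2,0,0), v5=(1/2,1/2,1/2,1/2,-1/2,1/2,0,0), v6=(1/2,1/2,1/2,1/2,1/2,-1/2,0,0), v7=(0,0,0,1,0,0,1/2,1/2), v8=(0,0,0,0,1,0,1/2,1/2), v9=(0,0,0,0,0,1,1/2,1/2), v10=(0,0,-1,0,0,0,1/2,1/2), v11=(0,-1,0,0,0,0,1/2,1/2), v12=(-1,0,0,0,0,0,1/2,1/2), is not saturated: the vector v0=(1,1,1,1,1,1,0,0)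 satisfies v0 = (v1+v2+v3+v4+v5+v6)/2 = v7+v8+v9-v10-v11-v12, so v0 lies in the ℤ-linear span and in the ℚ≥0-cone of {v1,...,v12}, yet v0 is not a ℤ≥0-linear combination of v1,...,v12. -/
namespace TorusNormal

def t1 : V 8 := ![-1/2, 1/2, 1/2, 1/2, 1/2, 1/2, 0, 0]
def t2 : V 8 := ![1/2, -1/2, 1/2, 1/2, 1/2, 1/2, 0, 0]
def t3 : V 8 := ![1/2, 1/2, -1/2, 1/2, 1/2, 1/2, 0, 0]
def t4 : V 8 := ![1/2, 1/2, 1/2, -1/2, 1/2, 1/2, 0, 0]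
def t5 : V 8 := ![1/2, 1/2, 1/2, 1/2, -1/2, 1/2, 0, 0]
def t6 : V 8 := ![1/2, 1/2, 1/2, 1/2, 1/2, -1/2, 0, 0]
def t7 : V 8 := ![0, 0, 0, 1, 0, 0, 1/2, 1/2]
def t8 : V 8 := ![0, 0, 0, 0, 1, 0, 1/2, 1/2]
def t9 : V 8 := ![0, 0, 0, 0, 0, 1, 1/2, 1/2]
def t10 : V 8 := ![0, 0, -1, 0, 0, 0, 1/2, 1/2]
def t11 : V 8 := ![0, -1, 0, 0, 0, 0, 1/2, 1/2]
def t12 : V 8 := ![-1, 0, 0, 0, 0, 0, 1/2, 1/2]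
def t0 : V 8 := ![1, 1, 1, 1, 1, 1, 0, 0]

def S7 : Set (V 8) := {t1, t2, t3, t4, t5, t6, t7, t8, t9, t10, t11, t12}


@[simp] lemma vec8_five {α : Type*} (a b c d e f g h : α) : ![a,b,c,d,e,f,g,h] 5 = f := by
  show ![a,b,c,d,e,f,g,h] ⟨5, by norm_num⟩ = f
  norm_num [Matrix.cons_val_succ', Matrix.cons_val_zero']

@[simp] lemma vec8_six {α : Type*} (a b c d e f g h : α) : ![a,b,c,d,e,f,g,h] 6 = g := by
  show ![a,b,c,d,e,f,g,h] ⟨6, by norm_num⟩ = g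
  norm_num [Matrix.cons_val_succ', Matrix.cons_val_zero']

@[simp] lemma vec8_seven {α : Type*} (a b c d e f g h : α) : ![a,b,c,d,e,f,g,h] 7 = h := by
  show ![a,b,c,d,e,f,g,h] ⟨7, by norm_num⟩ = h
  norm_num [Matrix.cons_val_succ', Matrix.cons_val_zero']

@[simp] lemma vec8_two {α : Type*} (a b c d e f g h : α) : ![a,b,c,d,e,f,g,h] 2 = c := by
  show ![a,b,c,d,e,f,g,h] ⟨2, by norm_num⟩ = c
  norm_num [Matrix.cons_val_succ', Matrix.cons_val_zero']

@[simp] lemma vec8_three {α : Type*} (a b c d e f g h : α) : ![a,b,c,d,e,f,g,h] 3 = d := by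
  show ![a,b,c,d,e,f,g,h] ⟨3, by norm_num⟩ = d
  norm_num [Matrix.cons_val_succ', Matrix.cons_val_zero']

@[simp] lemma vec8_four {α : Type*} (a b c d e f g h : α) : ![a,b,c,d,e,f,g,h] 4 = e := by
  show ![a,b,c,d,e,f,g,h] ⟨4, by norm_num⟩ = e
  norm_num [Matrix.cons_val_succ', Matrix.cons_val_zero']

/-- The invariant functional. -/
def Lfun (x : V 8) : ℚ := (x 0 + x 1 + x 2 + x 3 + x 4 + x 5)/4 - x 0

/-- The obstruction submonoid. -/
def Mmon : AddSubmonoid (V 8) where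
  carrier := {x | 0 ≤ x 6 ∧ (x 6 = 0 → ∃ m : ℤ, Lfun x = m)}
  zero_mem' := ⟨le_refl 0, fun _ => ⟨0, by simp [Lfun]⟩⟩
  add_mem' := by
    rintro x y ⟨hx6, hx⟩ ⟨hy6, hy⟩
    refine ⟨by simpa using add_nonneg hx6 hy6, fun h => ?_⟩
    simp only [Pi.add_apply] at h
    have hx0 : x 6 = 0 := le_antisymm (by linarith) hx6
    have hy0 : y 6 = 0 := le_antisymm (by linarith) hy6
    obtain ⟨m, hm⟩ := hx hx0
    obtain ⟨k, hk⟩ := hy hy0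
    refine ⟨m + k, ?_⟩
    simp only [Lfun, Pi.add_apply]
    push_cast
    simp only [Lfun] at hm hk
    linarith

lemma mem_Mmon {x : V 8} :
    x ∈ Mmon ↔ (0 ≤ x 6 ∧ (x 6 = 0 → ∃ m : ℤ, Lfun x = m)) := Iff.rfl

/-- The set `{v₁, …, v₁₂}` is not saturated: `v₀ = (v₁+⋯+v₆)/2 = v₇+v₈+v₉-v₁₀-v₁₁-v₁₂`
lies in the ℤ-linear span and in the ℚ≥0-cone of the set, but is not a ℤ≥0-combination
of its elements. -/
theorem e7_nonsaturated_example_nonlattice :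
    t0 = (2⁻¹ : ℚ) • (t1 + t2 + t3 + t4 + t5 + t6) ∧
    t0 = t7 + t8 + t9 - t10 - t11 - t12 ∧
    t0 ∈ Submodule.span ℤ S7 ∧
    InCone S7 t0 ∧
    t0 ∉ AddSubmonoid.closure S7 ∧
    ¬ IsSaturated S7 := by
  have h1 : t0 = (2⁻¹ : ℚ) • (t1 + t2 + t3 + t4 + t5 + t6) := by
    ext i; fin_cases i <;> norm_num [t0, t1, t2, t3, t4, t5, t6]
  have h2 : t0 = t7 + t8 + t9 - t10 - t11 - t12 := by
    ext i; fin_cases i <;> norm_num [t0, t7, t8, t9, t10, t11, t12]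
  have hmem : ∀ v ∈ S7, v ∈ Submodule.span ℤ S7 := fun v hv => Submodule.subset_span hv
  have hS : ∀ v, v = t1 ∨ v = t2 ∨ v = t3 ∨ v = t4 ∨ v = t5 ∨ v = t6 ∨ v = t7 ∨ v = t8 ∨
      v = t9 ∨ v = t10 ∨ v = t11 ∨ v = t12 → v ∈ S7 := by
    intro v hv
    simp only [S7, Set.mem_insert_iff, Set.mem_singleton_iff]
    exact hv
  have hspan : t0 ∈ Submodule.span ℤ S7 := by
    rw [h2]
    exact sub_mem (sub_mem (sub_mem (add_mem (add_mem
      (hmem t7 (hS t7 (by tauto))) (hmem t8 (hS t8 (by tauto)))) (hmem t9 (hS t9 (by tauto))))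
      (hmem t10 (hS t10 (by tauto)))) (hmem t11 (hS t11 (by tauto)))) (hmem t12 (hS t12 (by tauto)))
  -- distinctness of t1..t6
  have ne1 : ∀ v ∈ ({t2, t3, t4, t5, t6} : Finset (V 8)), t1 ≠ v := by
    intro v hv h
    simp only [Finset.mem_insert, Finset.mem_singleton] at hv
    rcases hv with rfl | rfl | rfl | rfl | rfl <;>
      · have := congrFun h 0; norm_num [t1, t2, t3, t4, t5, t6] at this
  have ne2 : ∀ v ∈ ({t3, t4, t5, t6} : Finset (V 8)), t2 ≠ v := by
    intro v hv h
    simp only [Finset.mem_insert, Finset.mem_singleton] at hv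
    rcases hv with rfl | rfl | rfl | rfl <;>
      · have := congrFun h 1; norm_num [t2, t3, t4, t5, t6] at this
  have ne3 : ∀ v ∈ ({t4, t5, t6} : Finset (V 8)), t3 ≠ v := by
    intro v hv h
    simp only [Finset.mem_insert, Finset.mem_singleton] at hv
    rcases hv with rfl | rfl | rfl <;>
      · have := congrFun h 2; norm_num [t3, t4, t5, t6] at this
  have ne4 : ∀ v ∈ ({t5, t6} : Finset (V 8)), t4 ≠ v := by
    intro v hv h
    simp only [Finset.mem_insert, Finset.mem_singleton] at hv
    rcases hv with rfl | rfl <;>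
      · have := congrFun h 3; norm_num [t4, t5, t6] at this
  have ne5 : t5 ≠ t6 := by
    intro h; have := congrFun h 4; norm_num [t5, t6] at this
  have hn1 : t1 ∉ ({t2, t3, t4, t5, t6} : Finset (V 8)) := fun h => ne1 t1 h rfl
  have hn2 : t2 ∉ ({t3, t4, t5, t6} : Finset (V 8)) := fun h => ne2 t2 h rfl
  have hn3 : t3 ∉ ({t4, t5, t6} : Finset (V 8)) := fun h => ne3 t3 h rfl
  have hn4 : t4 ∉ ({t5, t6} : Finset (V 8)) := fun h => ne4 t4 h rfl
  have hn5 : t5 ∉ ({t6} : Finset (V 8)) := by simpa using ne5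
  have hcone : InCone S7 t0 := by
    refine ⟨{t1, t2, t3, t4, t5, t6}, fun _ => 2⁻¹, ?_, fun x _ => by norm_num, ?_⟩
    · intro x hx
      simp only [Finset.coe_insert, Finset.coe_singleton, Set.mem_insert_iff,
        Set.mem_singleton_iff] at hx
      exact hS x (by tauto)
    · rw [Finset.sum_insert hn1, Finset.sum_insert hn2, Finset.sum_insert hn3,
        Finset.sum_insert hn4, Finset.sum_insert hn5, Finset.sum_singleton, h1]
      simp only [smul_add]
      abel
  have hgen : S7 ⊆ ↑Mmon := by
    intro v hv
    simp only [S7, Set.mem_insert_iff, Set.mem_singleton_iff] at hv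
    rcases hv with rfl | rfl | rfl | rfl | rfl | rfl | rfl | rfl | rfl | rfl | rfl | rfl <;>
        rw [SetLike.mem_coe, mem_Mmon]
    · exact ⟨by norm_num [t1], fun _ => ⟨1, by norm_num [Lfun, t1]⟩⟩
    · exact ⟨by norm_num [t2], fun _ => ⟨0, by norm_num [Lfun, t2]⟩⟩
    · exact ⟨by norm_num [t3], fun _ => ⟨0, by norm_num [Lfun, t3]⟩⟩
    · exact ⟨by norm_num [t4], fun _ => ⟨0, by norm_num [Lfun, t4]⟩⟩
    · exact ⟨by norm_num [t5], fun _ => ⟨0, by norm_num [Lfun, t5]⟩⟩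
    · exact ⟨by norm_num [t6], fun _ => ⟨0, by norm_num [Lfun, t6]⟩⟩
    · exact ⟨by norm_num [t7], fun h6 => absurd h6 (by norm_num [t7])⟩
    · exact ⟨by norm_num [t8], fun h6 => absurd h6 (by norm_num [t8])⟩
    · exact ⟨by norm_num [t9], fun h6 => absurd h6 (by norm_num [t9])⟩
    · exact ⟨by norm_num [t10], fun h6 => absurd h6 (by norm_num [t10])⟩
    · exact ⟨by norm_num [t11], fun h6 => absurd h6 (by norm_num [t11])⟩
    · exact ⟨by norm_num [t12], fun h6 => absurd h6 (by norm_num [t12])⟩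
  have hnot : t0 ∉ AddSubmonoid.closure S7 := by
    intro h
    have hle : AddSubmonoid.closure S7 ≤ Mmon := AddSubmonoid.closure_le.mpr hgen
    obtain ⟨-, hI⟩ := (mem_Mmon).mp (hle h)
    obtain ⟨m, hm⟩ := hI (by norm_num [t0])
    have hL : Lfun t0 = 1/2 := by norm_num [Lfun, t0]
    rw [hL] at hm
    have : (2 * m : ℤ) = 1 := by exact_mod_cast (by linarith : (2 : ℚ) * m = 1)
    omega
  exact ⟨h1, h2, hspan, hcone, hnot, fun hs => hnot (hs t0 hspan hcone)⟩


end TorusNormal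
end

section
/- The subset {v1,...,v7} of ℚ^9, where v1=(1/3)(2,-1,-1,0,0,0,1,1,-2), v2=(1/3)(2,-1,-1,0,0,0,1,-2,1), v3=(1/3)(2,-1,-1,0,0,0,-2,1,1), v4=(1/3)(1,1,-2,2,-1,-1,0,0,0), v5=(1/3)(1,1,-2,-1,2,-1,0,0,0), v6=(1/3)(1,1,-2,-1,-1,2,0,0,0), v7=(1/3)(-1,-1,2,0,0,0,1,1,-2), is not saturated: the vector v0=(1,0,-1,0,0,0,0,0,0) satisfies v0 = (v1+v2+v3+v4+v5+v6)/3 = v1 - v7, so v0 lies in the ℤ-linear span and in the ℚ≥0-cone of {v1,...,v7}, yet v0 is not a ℤ≥0-linear combination of v1,...,v7. -/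
namespace TorusNormal

def r1 : V 9 := ![2/3, -1/3, -1/3, 0, 0, 0, 1/3, 1/3, -2/3]
def r2 : V 9 := ![2/3, -1/3, -1/3, 0, 0, 0, 1/3, -2/3, 1/3]
def r3 : V 9 := ![2/3, -1/3, -1/3, 0, 0, 0, -2/3, 1/3, 1/3]
def r4 : V 9 := ![1/3, 1/3, -2/3, 2/3, -1/3, -1/3, 0, 0, 0]
def r5 : V 9 := ![1/3, 1/3, -2/3, -1/3, 2/3, -1/3, 0, 0, 0]
def r6 : V 9 := ![1/3, 1/3, -2/3, -1/3, -1/3, 2/3, 0, 0, 0]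
def r7 : V 9 := ![-1/3, -1/3, 2/3, 0, 0, 0, 1/3, 1/3, -2/3]
def r0 : V 9 := ![1, 0, -1, 0, 0, 0, 0, 0, 0]

def S9 : Set (V 9) := {r1, r2, r3, r4, r5, r6, r7}

lemma nat_comb_of_mem_closure (v : V 9) (hv : v ∈ AddSubmonoid.closure S9) :
    ∃ a b c d e f g : ℕ,
      v = a • r1 + b • r2 + c • r3 + d • r4 + e • r5 + f • r6 + g • r7 := by
  induction hv using AddSubmonoid.closure_induction with
  | mem x hx =>
      simp only [S9, Set.mem_insert_iff, Set.mem_singleton_iff] at hx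
      rcases hx with rfl | rfl | rfl | rfl | rfl | rfl | rfl
      · exact ⟨1, 0, 0, 0, 0, 0, 0, by simp⟩
      · exact ⟨0, 1, 0, 0, 0, 0, 0, by simp⟩
      · exact ⟨0, 0, 1, 0, 0, 0, 0, by simp⟩
      · exact ⟨0, 0, 0, 1, 0, 0, 0, by simp⟩
      · exact ⟨0, 0, 0, 0, 1, 0, 0, by simp⟩
      · exact ⟨0, 0, 0, 0, 0, 1, 0, by simp⟩
      · exact ⟨0, 0, 0, 0, 0, 0, 1, by simp⟩
  | zero => exact ⟨0, 0, 0, 0, 0, 0, 0, by simp⟩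
  | add x y _ _ ihx ihy =>
      obtain ⟨a, b, c, d, e, f, g, rfl⟩ := ihx
      obtain ⟨a', b', c', d', e', f', g', rfl⟩ := ihy
      exact ⟨a + a', b + b', c + c', d + d', e + e', f + f', g + g', by
        simp only [add_smul]; abel⟩

lemma r0_not_mem_closure : r0 ∉ AddSubmonoid.closure S9 := by
  intro hmem
  obtain ⟨a, b, c, d, e, f, g, h⟩ := nat_comb_of_mem_closure r0 hmem
  have h0 := congrFun h ⟨0, by norm_num⟩
  have h1 := congrFun h ⟨1, by norm_num⟩
  have h3 := congrFun h ⟨3, by norm_num⟩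
  have h4 := congrFun h ⟨4, by norm_num⟩
  have h6 := congrFun h ⟨6, by norm_num⟩
  have h7 := congrFun h ⟨7, by norm_num⟩
  have h8 := congrFun h ⟨8, by norm_num⟩
  simp only [r0, r1, r2, r3, r4, r5, r6, r7, Pi.add_apply, Pi.smul_apply,
    nsmul_eq_mul] at h0 h1 h3 h4 h6 h7 h8
  norm_num [Matrix.cons_val_succ', Matrix.cons_val_zero] at h0 h1 h3 h4 h6 h7 h8
  have key1 : 3 * (b : ℚ) = (g : ℚ) + 1 := by linarith
  have key2 : (a : ℚ) + (g : ℚ) = (b : ℚ) := by linarith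
  have k1 : 3 * b = g + 1 := by exact_mod_cast key1
  have k2 : a + g = b := by exact_mod_cast key2
  omega

/-- The set `{v₁, …, v₇}` is not saturated: `v₀ = (v₁+⋯+v₆)/3 = v₁ - v₇` lies in the
ℤ-linear span and in the ℚ≥0-cone of the set, but is not a ℤ≥0-combination of its
elements. -/
theorem e6_nonsaturated_example_pi1 :
    r0 = (3⁻¹ : ℚ) • (r1 + r2 + r3 + r4 + r5 + r6) ∧
    r0 = r1 - r7 ∧
    r0 ∈ Submodule.span ℤ S9 ∧
    InCone S9 r0 ∧
    r0 ∉ AddSubmonoid.closure S9 ∧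
    ¬ IsSaturated S9 := by
  have e1 : r0 = (3⁻¹ : ℚ) • (r1 + r2 + r3 + r4 + r5 + r6) := by
    funext i; fin_cases i <;> norm_num [r0, r1, r2, r3, r4, r5, r6]
  have e2 : r0 = r1 - r7 := by
    funext i; fin_cases i <;> norm_num [r0, r1, r7]
  have hspan : r0 ∈ Submodule.span ℤ S9 := by
    rw [e2]
    exact sub_mem (Submodule.subset_span (by simp [S9]))
      (Submodule.subset_span (by simp [S9]))
  have hcone : InCone S9 r0 := by
    refine ⟨{r1, r2, r3, r4, r5, r6}, fun _ => 3⁻¹, ?_, fun x _ => by norm_num, ?_⟩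
    · intro x hx
      simp only [Finset.coe_insert, Finset.coe_singleton, Set.mem_insert_iff,
        Set.mem_singleton_iff] at hx
      simp only [S9, Set.mem_insert_iff, Set.mem_singleton_iff]
      tauto
    · have ne' : ∀ (i : Fin 9) (x y : V 9), x i ≠ y i → x ≠ y :=
        fun i x y h hc => h (congrFun hc i)
      have n12 : r1 ≠ r2 := ne' ⟨7, by norm_num⟩ _ _ (by rw [r1, r2]; norm_num [Matrix.cons_val_succ'])
      have n13 : r1 ≠ r3 := ne' ⟨6, by norm_num⟩ _ _ (by rw [r1, r3]; norm_num [Matrix.cons_val_succ'])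
      have n14 : r1 ≠ r4 := ne' ⟨0, by norm_num⟩ _ _ (by rw [r1, r4]; norm_num [Matrix.cons_val_succ'])
      have n15 : r1 ≠ r5 := ne' ⟨0, by norm_num⟩ _ _ (by rw [r1, r5]; norm_num [Matrix.cons_val_succ'])
      have n16 : r1 ≠ r6 := ne' ⟨0, by norm_num⟩ _ _ (by rw [r1, r6]; norm_num [Matrix.cons_val_succ'])
      have n23 : r2 ≠ r3 := ne' ⟨6, by norm_num⟩ _ _ (by rw [r2, r3]; norm_num [Matrix.cons_val_succ'])
      have n24 : r2 ≠ r4 := ne' ⟨0, by norm_num⟩ _ _ (by rw [r2, r4]; norm_num [Matrix.cons_val_succ'])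
      have n25 : r2 ≠ r5 := ne' ⟨0, by norm_num⟩ _ _ (by rw [r2, r5]; norm_num [Matrix.cons_val_succ'])
      have n26 : r2 ≠ r6 := ne' ⟨0, by norm_num⟩ _ _ (by rw [r2, r6]; norm_num [Matrix.cons_val_succ'])
      have n34 : r3 ≠ r4 := ne' ⟨0, by norm_num⟩ _ _ (by rw [r3, r4]; norm_num [Matrix.cons_val_succ'])
      have n35 : r3 ≠ r5 := ne' ⟨0, by norm_num⟩ _ _ (by rw [r3, r5]; norm_num [Matrix.cons_val_succ'])
      have n36 : r3 ≠ r6 := ne' ⟨0, by norm_num⟩ _ _ (by rw [r3, r6]; norm_num [Matrix.cons_val_succ'])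
      have n45 : r4 ≠ r5 := ne' ⟨3, by norm_num⟩ _ _ (by rw [r4, r5]; norm_num [Matrix.cons_val_succ'])
      have n46 : r4 ≠ r6 := ne' ⟨3, by norm_num⟩ _ _ (by rw [r4, r6]; norm_num [Matrix.cons_val_succ'])
      have n56 : r5 ≠ r6 := ne' ⟨4, by norm_num⟩ _ _ (by rw [r5, r6]; norm_num [Matrix.cons_val_succ'])
      rw [Finset.sum_insert (by simp [n12, n13, n14, n15, n16]),
        Finset.sum_insert (by simp [n23, n24, n25, n26]),
        Finset.sum_insert (by simp [n34, n35, n36]),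
        Finset.sum_insert (by simp [n45, n46]),
        Finset.sum_insert (by simp [n56]), Finset.sum_singleton, e1]
      module
  have hnot : r0 ∉ AddSubmonoid.closure S9 := r0_not_mem_closure
  exact ⟨e1, e2, hspan, hcone, hnot, fun hsat => hnot (hsat r0 hspan hcone)⟩


end TorusNormal
end

section
/- The subset {v1,...,v7} of ℚ^9, where v1=(1,0,-1,0,0,0,0,0,0), v2=(1,-1,0,0,0,0,0,0,0), v3=(0,0,0,1,0,-1,0,0,0), v4=(0,0,0,1,-1,0,0,0,0), v5=(0,0,0,0,0,0,1,0,-1), v6=(0,0,0,0,0,0,1,-1,0), v7=(1/3,1/3,-2/3,-2/3,1/3,1/3,-2/3,1/3,1/3), is not saturated: the vector v0=(1/3)(2,-1,-1,2,-1,-1,2,-1,-1) satisfies v0 = (v1+v2+v3+v4+v5+v6)/3 = v1 - v7, so v0 lies in the ℤ-linear span and in the ℚ≥0-cone of {v1,...,v7}, yet v0 is not a ℤ≥0-linear combination of v1,...,v7. -/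
namespace TorusNormal

def q1 : V 9 := ![1, 0, -1, 0, 0, 0, 0, 0, 0]
def q2 : V 9 := ![1, -1, 0, 0, 0, 0, 0, 0, 0]
def q3 : V 9 := ![0, 0, 0, 1, 0, -1, 0, 0, 0]
def q4 : V 9 := ![0, 0, 0, 1, -1, 0, 0, 0, 0]
def q5 : V 9 := ![0, 0, 0, 0, 0, 0, 1, 0, -1]
def q6 : V 9 := ![0, 0, 0, 0, 0, 0, 1, -1, 0]
def q7 : V 9 := ![1/3, 1/3, -2/3, -2/3, 1/3, 1/3, -2/3, 1/3, 1/3]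
def q0 : V 9 := ![2/3, -1/3, -1/3, 2/3, -1/3, -1/3, 2/3, -1/3, -1/3]

def S10 : Set (V 9) := {q1, q2, q3, q4, q5, q6, q7}


/-- The obstruction submonoid: vectors whose coordinate 2 has the form `-a - (2/3)b`
with `a b : ℕ`. -/
def obstr : AddSubmonoid (V 9) where
  carrier := {x | ∃ a b : ℕ, x 2 = -(a : ℚ) - (2/3) * b}
  zero_mem' := ⟨0, 0, by norm_num⟩
  add_mem' := by
    rintro x y ⟨a, b, hx⟩ ⟨a', b', hy⟩
    exact ⟨a + a', b + b', by simp [Pi.add_apply, hx, hy]; ring⟩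

lemma S10_subset_obstr : S10 ⊆ (obstr : Set (V 9)) := by
  rintro x (rfl | rfl | rfl | rfl | rfl | rfl | rfl)
  · exact ⟨1, 0, by norm_num [q1]; rfl⟩
  · exact ⟨0, 0, by norm_num [q2]; rfl⟩
  · exact ⟨0, 0, by norm_num [q3]; rfl⟩
  · exact ⟨0, 0, by norm_num [q4]; rfl⟩
  · exact ⟨0, 0, by norm_num [q5]; rfl⟩
  · exact ⟨0, 0, by norm_num [q6]; rfl⟩
  · exact ⟨0, 1, by norm_num [q7]; rfl⟩

lemma q0_not_obstr : q0 ∉ (obstr : Set (V 9)) := by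
  rintro ⟨a, b, h⟩
  have h2 : (-1 : ℚ)/3 = -(a : ℚ) - (2/3) * b := by
    simpa [q0] using h
  have h3 : ((3 * a + 2 * b : ℕ) : ℚ) = ((1 : ℕ) : ℚ) := by push_cast; linarith
  have h4 : 3 * a + 2 * b = 1 := Nat.cast_injective h3
  omega

lemma hq_eq1 : q0 = (3⁻¹ : ℚ) • (q1 + q2 + q3 + q4 + q5 + q6) := by
  funext i
  fin_cases i <;> norm_num [q0, q1, q2, q3, q4, q5, q6]

lemma hq_eq2 : q0 = q1 - q7 := by
  funext i
  fin_cases i <;> norm_num [q0, q1, q7]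

/-- The set `{v₁, …, v₇}` is not saturated: `v₀ = (v₁+⋯+v₆)/3 = v₁ - v₇` lies in the
ℤ-linear span and in the ℚ≥0-cone of the set, but is not a ℤ≥0-combination of its
elements. -/
theorem e6_nonsaturated_example_pi2 :
    q0 = (3⁻¹ : ℚ) • (q1 + q2 + q3 + q4 + q5 + q6) ∧
    q0 = q1 - q7 ∧
    q0 ∈ Submodule.span ℤ S10 ∧
    InCone S10 q0 ∧
    q0 ∉ AddSubmonoid.closure S10 ∧
    ¬ IsSaturated S10 := by
  have h1 : q0 = (3⁻¹ : ℚ) • (q1 + q2 + q3 + q4 + q5 + q6) := hq_eq1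
  have h2 : q0 = q1 - q7 := hq_eq2
  have hq1 : q1 ∈ S10 := by simp [S10]
  have hq7 : q7 ∈ S10 := by simp [S10]
  have hspan : q0 ∈ Submodule.span ℤ S10 := by
    rw [h2]
    exact sub_mem (Submodule.subset_span hq1) (Submodule.subset_span hq7)
  have hcone : InCone S10 q0 := by
    refine ⟨{q1, q2, q3, q4, q5, q6}, fun _ => 3⁻¹, ?_, fun x _ => by norm_num, ?_⟩
    · intro x hx
      simp only [Finset.coe_insert, Finset.coe_singleton, Set.mem_insert_iff,
        Set.mem_singleton_iff] at hx
      rcases hx with rfl | rfl | rfl | rfl | rfl | rfl <;> simp [S10]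
    · rw [Finset.sum_insert (by decide), Finset.sum_insert (by decide),
        Finset.sum_insert (by decide), Finset.sum_insert (by decide),
        Finset.sum_insert (by decide), Finset.sum_singleton, h1]
      module
  have hnot : q0 ∉ AddSubmonoid.closure S10 := fun h =>
    q0_not_obstr ((AddSubmonoid.closure_le.mpr S10_subset_obstr) h)
  exact ⟨h1, h2, hspan, hcone, hnot, fun hs => hnot (hs q0 hspan hcone)⟩


end TorusNormal
end

section
/- The set S = {(0,1,-1), (0,-1,1), (1,0,-1), (-1,0,1), (1,-1,0), (-1,1,0)} of six vectors in ℚ^3 (the short roots of G2) is hereditarily normal: every subset of S is saturated. -/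
namespace TorusNormal

/-- The six short roots of `G₂`. -/
def g2short : Set (V 3) :=
  {![0, 1, -1], ![0, -1, 1], ![1, 0, -1], ![-1, 0, 1], ![1, -1, 0], ![-1, 1, 0]}

/-! ### Auxiliary material for the proof -/

/-- The six short roots, as a function on `Fin 6`. -/
def wv : Fin 6 → V 3 := ![![0,1,-1], ![0,-1,1], ![1,0,-1], ![-1,0,1], ![1,-1,0], ![-1,1,0]]

/-- Integer coordinates of the six roots. -/
def zv : Fin 6 → Fin 3 → ℤ := ![![0,1,-1], ![0,-1,1], ![1,0,-1], ![-1,0,1], ![1,-1,0], ![-1,1,0]]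

lemma zv_cast (i : Fin 6) (k : Fin 3) : ((zv i k : ℤ) : ℚ) = wv i k := by
  fin_cases i <;> fin_cases k <;> norm_num [wv, zv]

lemma wv00 : wv 0 (0 : Fin 3) = 0 := rfl
lemma wv01 : wv 0 (1 : Fin 3) = 1 := rfl
lemma wv02 : wv 0 (2 : Fin 3) = -1 := rfl
lemma wv10 : wv 1 (0 : Fin 3) = 0 := rfl
lemma wv11 : wv 1 (1 : Fin 3) = -1 := rfl
lemma wv12 : wv 1 (2 : Fin 3) = 1 := rfl
lemma wv20 : wv 2 (0 : Fin 3) = 1 := rfl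
lemma wv21 : wv 2 (1 : Fin 3) = 0 := rfl
lemma wv22 : wv 2 (2 : Fin 3) = -1 := rfl
lemma wv30 : wv 3 (0 : Fin 3) = -1 := rfl
lemma wv31 : wv 3 (1 : Fin 3) = 0 := rfl
lemma wv32 : wv 3 (2 : Fin 3) = 1 := rfl
lemma wv40 : wv 4 (0 : Fin 3) = 1 := rfl
lemma wv41 : wv 4 (1 : Fin 3) = -1 := rfl
lemma wv42 : wv 4 (2 : Fin 3) = 0 := rfl
lemma wv50 : wv 5 (0 : Fin 3) = -1 := rfl
lemma wv51 : wv 5 (1 : Fin 3) = 1 := rfl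
lemma wv52 : wv 5 (2 : Fin 3) = 0 := rfl

lemma mem_g2short_iff (x : V 3) : x ∈ g2short ↔ ∃ i : Fin 6, wv i = x := by
  constructor
  · intro hx
    rcases hx with h|h|h|h|h|h
    · exact ⟨0, h.symm⟩
    · exact ⟨1, h.symm⟩
    · exact ⟨2, h.symm⟩
    · exact ⟨3, h.symm⟩
    · exact ⟨4, h.symm⟩
    · exact ⟨5, h.symm⟩
  · rintro ⟨i, rfl⟩
    fin_cases i
    · exact Or.inl rfl
    · exact Or.inr (Or.inl rfl)
    · exact Or.inr (Or.inr (Or.inl rfl))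
    · exact Or.inr (Or.inr (Or.inr (Or.inl rfl)))
    · exact Or.inr (Or.inr (Or.inr (Or.inr (Or.inl rfl))))
    · exact Or.inr (Or.inr (Or.inr (Or.inr (Or.inr rfl))))

lemma wv_inj : Function.Injective wv := by decide

lemma toNat_cast_sub (m : ℤ) : ((m.toNat : ℚ)) - (((-m).toNat : ℚ)) = (m : ℚ) := by
  exact_mod_cast (show ((m.toNat : ℤ)) - (((-m).toNat : ℤ)) = m by omega)

lemma pos_of_near {m : ℤ} {b : ℚ} (h1 : (m : ℚ) < b + 1) (hm : 0 < m) : 0 < b := by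
  have : (1 : ℚ) ≤ (m : ℚ) := by exact_mod_cast hm
  linarith

lemma neg_of_near {m : ℤ} {b : ℚ} (h2 : b < (m : ℚ) + 1) (hm : m < 0) : b < 0 := by
  have : (m : ℚ) ≤ -1 := by exact_mod_cast (show m ≤ -1 by omega)
  linarith

lemma nsmul_mem_closure {T : Set (V 3)} (nn : ℕ) (x : V 3) (hx : nn ≠ 0 → x ∈ T) :
    nn • x ∈ AddSubmonoid.closure T := by
  rcases Nat.eq_zero_or_pos nn with h | h
  · subst h
    simpa using (AddSubmonoid.closure T).zero_mem
  · exact nsmul_mem (AddSubmonoid.subset_closure (hx h.ne')) nn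

lemma int_coords {T : Set (V 3)} (hT : T ⊆ g2short) (v : V 3)
    (hspan : v ∈ Submodule.span ℤ T) : ∀ k, ∃ z : ℤ, v k = (z : ℚ) := by
  induction hspan using Submodule.span_induction with
  | mem x hxT =>
      obtain ⟨i, rfl⟩ := (mem_g2short_iff x).1 (hT hxT)
      exact fun k => ⟨zv i k, (zv_cast i k).symm⟩
  | zero => exact fun k => ⟨0, by simp⟩
  | add x y _ _ hx hy =>
      intro k
      obtain ⟨z1, h1⟩ := hx k
      obtain ⟨z2, h2⟩ := hy k
      exact ⟨z1 + z2, by push_cast [Pi.add_apply, h1, h2]; ring⟩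
  | smul g x _ hx =>
      intro k
      obtain ⟨z, h⟩ := hx k
      exact ⟨g * z, by push_cast [Pi.smul_apply, h, zsmul_eq_mul]; ring⟩

/-- The set of six short roots of `G₂` is hereditarily normal: each of its subsets is
saturated. -/
theorem g2_short_roots_hereditarily_normal : HereditarilyNormal g2short := by
  intro T hT v hspan hcone
  have hint : ∀ k, ∃ z : ℤ, v k = (z : ℚ) := int_coords hT v hspan
  obtain ⟨X, hX⟩ := hint 0
  obtain ⟨Y, hY⟩ := hint 1
  obtain ⟨t, c, htT, hc0, hv⟩ := hcone
  set a : Fin 6 → ℚ := fun i => if wv i ∈ t then c (wv i) else 0 with ha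
  have ha0 : ∀ i, 0 ≤ a i := by
    intro i
    simp only [ha]
    split
    · exact hc0 _ ‹_›
    · exact le_refl 0
  have haT : ∀ i, a i ≠ 0 → wv i ∈ T := by
    intro i hi
    by_cases h : wv i ∈ t
    · exact htT h
    · simp [ha, h] at hi
  have hsum : v = ∑ i : Fin 6, a i • wv i := by
    have himg : t = (Finset.univ.filter (fun i => wv i ∈ t)).image wv := by
      ext x
      simp only [Finset.mem_image, Finset.mem_filter, Finset.mem_univ, true_and]
      constructor
      · intro hx
        obtain ⟨i, rfl⟩ := (mem_g2short_iff x).1 (hT (htT hx))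
        exact ⟨i, hx, rfl⟩
      · rintro ⟨i, hi, rfl⟩; exact hi
    have key : ∑ i : Fin 6, a i • wv i = ∑ x ∈ t, c x • x := by
      have ee : ∀ i : Fin 6, a i • wv i
          = (if wv i ∈ t then c (wv i) • wv i else 0) := by
        intro i; simp only [ha]; split <;> simp
      simp only [ee]
      rw [← Finset.sum_filter]
      conv_rhs => rw [himg, Finset.sum_image (fun i _ j _ h => wv_inj h)]
    rw [hv, ← key]
  -- coordinates of `v` in terms of the coefficients
  have e0 : v 0 = (a 2 - a 3) + (a 4 - a 5) := by
    rw [hsum]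
    simp only [Finset.sum_apply, Pi.smul_apply, smul_eq_mul, Fin.sum_univ_six,
      wv00, wv01, wv02, wv10, wv11, wv12, wv20, wv21, wv22, wv30, wv31, wv32, wv40, wv41, wv42, wv50, wv51, wv52]
    ring
  have e1 : v 1 = (a 0 - a 1) - (a 4 - a 5) := by
    rw [hsum]
    simp only [Finset.sum_apply, Pi.smul_apply, smul_eq_mul, Fin.sum_univ_six,
      wv00, wv01, wv02, wv10, wv11, wv12, wv20, wv21, wv22, wv30, wv31, wv32, wv40, wv41, wv42, wv50, wv51, wv52]
    ring
  have e2 : v 2 = -(a 0 - a 1) - (a 2 - a 3) := by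
    rw [hsum]
    simp only [Finset.sum_apply, Pi.smul_apply, smul_eq_mul, Fin.sum_univ_six,
      wv00, wv01, wv02, wv10, wv11, wv12, wv20, wv21, wv22, wv30, wv31, wv32, wv40, wv41, wv42, wv50, wv51, wv52]
    ring
  -- the integer coefficients
  set m1 : ℤ := ⌈a 2 - a 3⌉ with hm1
  set m0 : ℤ := X + Y - m1 with hm0
  set m2 : ℤ := X - m1 with hm2
  have hb1le : (a 2 - a 3) ≤ (m1 : ℚ) := Int.le_ceil _
  have hb1gt : (m1 : ℚ) < (a 2 - a 3) + 1 := Int.ceil_lt_add_one _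
  have cm0 : ((m0 : ℤ) : ℚ) = v 0 + v 1 - (m1 : ℚ) := by
    rw [hm0]; push_cast; rw [← hX, ← hY]
  have cm2 : ((m2 : ℤ) : ℚ) = v 0 - (m1 : ℚ) := by
    rw [hm2]; push_cast; rw [← hX]
  -- sign transfer facts
  have h0p : 0 < m0 → 0 < a 0 - a 1 := by
    intro h
    refine pos_of_near (m := m0) ?_ h
    rw [cm0, e0, e1]; linarith
  have h0n : m0 < 0 → a 0 - a 1 < 0 := by
    intro h
    refine neg_of_near (m := m0) ?_ h
    rw [cm0, e0, e1]; linarith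
  have h1p : 0 < m1 → 0 < a 2 - a 3 := fun h => pos_of_near hb1gt h
  have h1n : m1 < 0 → a 2 - a 3 < 0 := fun h =>
    neg_of_near (by linarith : (a 2 - a 3) < (m1 : ℚ) + 1) h
  have h2p : 0 < m2 → 0 < a 4 - a 5 := by
    intro h
    refine pos_of_near (m := m2) ?_ h
    rw [cm2, e0]; linarith
  have h2n : m2 < 0 → a 4 - a 5 < 0 := by
    intro h
    refine neg_of_near (m := m2) ?_ h
    rw [cm2, e0]; linarith
  -- `v` as a nonnegative integer combination
  have final : v = (m0.toNat) • wv 0 + ((-m0).toNat) • wv 1 + (m1.toNat) • wv 2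
      + ((-m1).toNat) • wv 3 + (m2.toNat) • wv 4 + ((-m2).toNat) • wv 5 := by
    have t0 := toNat_cast_sub m0
    have t1 := toNat_cast_sub m1
    have t2 := toNat_cast_sub m2
    have expand : ∀ kk : Fin 3, ((m0.toNat) • wv 0 + ((-m0).toNat) • wv 1
        + (m1.toNat) • wv 2 + ((-m1).toNat) • wv 3 + (m2.toNat) • wv 4
        + ((-m2).toNat) • wv 5) kk
        = (m0.toNat : ℚ) * wv 0 kk + ((-m0).toNat : ℚ) * wv 1 kk
          + (m1.toNat : ℚ) * wv 2 kk + ((-m1).toNat : ℚ) * wv 3 kk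
          + (m2.toNat : ℚ) * wv 4 kk + ((-m2).toNat : ℚ) * wv 5 kk := by
      intro kk
      simp only [Pi.add_apply, Pi.smul_apply]
      simp only [nsmul_eq_mul]
    have q0 : v 0 = (m0.toNat : ℚ) * wv 0 0 + ((-m0).toNat : ℚ) * wv 1 0 + (m1.toNat : ℚ) * wv 2 0 + ((-m1).toNat : ℚ) * wv 3 0 + (m2.toNat : ℚ) * wv 4 0 + ((-m2).toNat : ℚ) * wv 5 0 := by
      simp only [wv00, wv01, wv02, wv10, wv11, wv12, wv20, wv21, wv22, wv30, wv31, wv32, wv40, wv41, wv42, wv50, wv51, wv52]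
      rw [e0]
      linarith [cm0, cm2, t0, t1, t2, e0, e1, e2]
    have q1 : v 1 = (m0.toNat : ℚ) * wv 0 1 + ((-m0).toNat : ℚ) * wv 1 1 + (m1.toNat : ℚ) * wv 2 1 + ((-m1).toNat : ℚ) * wv 3 1 + (m2.toNat : ℚ) * wv 4 1 + ((-m2).toNat : ℚ) * wv 5 1 := by
      simp only [wv00, wv01, wv02, wv10, wv11, wv12, wv20, wv21, wv22, wv30, wv31, wv32, wv40, wv41, wv42, wv50, wv51, wv52]
      rw [e1]
      linarith [cm0, cm2, t0, t1, t2, e0, e1, e2]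
    have q2 : v 2 = (m0.toNat : ℚ) * wv 0 2 + ((-m0).toNat : ℚ) * wv 1 2 + (m1.toNat : ℚ) * wv 2 2 + ((-m1).toNat : ℚ) * wv 3 2 + (m2.toNat : ℚ) * wv 4 2 + ((-m2).toNat : ℚ) * wv 5 2 := by
      simp only [wv00, wv01, wv02, wv10, wv11, wv12, wv20, wv21, wv22, wv30, wv31, wv32, wv40, wv41, wv42, wv50, wv51, wv52]
      rw [e2]
      linarith [cm0, cm2, t0, t1, t2, e0, e1, e2]
    funext k
    fin_cases k
    · exact q0.trans (expand 0).symm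
    · exact q1.trans (expand 1).symm
    · exact q2.trans (expand 2).symm

  rw [final]
  refine add_mem (add_mem (add_mem (add_mem (add_mem ?_ ?_) ?_) ?_) ?_) ?_
  · refine nsmul_mem_closure _ _ fun h => haT 0 ?_
    have hp : 0 < m0 := by omega
    have hA := h0p hp
    have hB := ha0 1
    intro h0
    rw [h0] at hA
    linarith
  · refine nsmul_mem_closure _ _ fun h => haT 1 ?_
    have hp : m0 < 0 := by omega
    have hA := h0n hp
    have hB := ha0 0
    intro h0
    rw [h0] at hA
    linarith
  · refine nsmul_mem_closure _ _ fun h => haT 2 ?_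
    have hp : 0 < m1 := by omega
    have hA := h1p hp
    have hB := ha0 3
    intro h0
    rw [h0] at hA
    linarith
  · refine nsmul_mem_closure _ _ fun h => haT 3 ?_
    have hp : m1 < 0 := by omega
    have hA := h1n hp
    have hB := ha0 2
    intro h0
    rw [h0] at hA
    linarith
  · refine nsmul_mem_closure _ _ fun h => haT 4 ?_
    have hp : 0 < m2 := by omega
    have hA := h2p hp
    have hB := ha0 5
    intro h0
    rw [h0] at hA
    linarith
  · refine nsmul_mem_closure _ _ fun h => haT 5 ?_
    have hp : m2 < 0 := by omega
    have hA := h2n hp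
    have hB := ha0 4
    intro h0
    rw [h0] at hA
    linarith

end TorusNormal
end
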